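/- Let γ ∈ (0,1), η > 0, λ > 0 with γ·λ < 1, and let f : ℕ → ℝ satisfy 0 ≤ f(l) ≤ λ^l for every l ≥ 1. Set H = η · ∑_{l=1}^∞ γ^l · f(l). Fix natural numbers a ≥ 1 and b, and define g(h) = a·h + b. Then there exist constants C > 0 and r ∈ (0,1) — explicitly C = η · (γλ)^{b+1} / (1 − γλ) and r = (γλ)^a — such that for every h ∈ ℕ, |H − η · ∑_{l=1}^{g(h)} γ^l · f(l)| ≤ C · r^h. In particular, the approximation error of the heuristic computed from the terms of length at most g(h) = a·h + b decreases at least exponentially with h. -/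

import Mathlib

open Finset

theorem norm_tsum_sub_sum_range_le_geometric {E : Type*} [NormedAddCommGroup E] [CompleteSpace E]
    {u : ℕ → E} {C q : ℝ} (hq0 : 0 ≤ q) (hq1 : q < 1) (hu : ∀ l, ‖u l‖ ≤ C * q ^ l) (n : ℕ) :
    ‖∑' l, u l - ∑ l ∈ range n, u l‖ ≤ C * q ^ n / (1 - q) := by
  have hsum : Summable u :=
    .of_norm_bounded ((summable_geometric_of_lt_one hq0 hq1).mul_left C) hu
  have hstep : ∀ k, dist (∑ l ∈ range k, u l) (∑ l ∈ range (k + 1), u l) ≤ C * q ^ k := by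
    intro k
    rw [dist_eq_norm, sum_range_succ, sub_add_cancel_left, norm_neg]
    exact hu k
  rw [← dist_eq_norm, dist_comm]
  exact dist_le_of_le_geometric_of_tendsto q C hq1 hstep hsum.hasSum.tendsto_sum_nat n

theorem gamma_decaying_exponential_error_general
    (γ lam η : ℝ) (hγ0 : 0 < γ) (hη : 0 < η) (hlam : 0 < lam)
    (hγlam : γ * lam < 1)
    (f : ℕ → ℝ) (hf0 : ∀ l : ℕ, 1 ≤ l → 0 ≤ f l) (hf1 : ∀ l : ℕ, 1 ≤ l → f l ≤ lam ^ l)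
    (a b : ℕ) (ha : 1 ≤ a) :
    ∃ C r : ℝ, C = η * (γ * lam) ^ (b + 1) / (1 - γ * lam) ∧ r = (γ * lam) ^ a ∧
      0 < C ∧ 0 < r ∧ r < 1 ∧
      ∀ h : ℕ,
        |η * (∑' l : ℕ, γ ^ (l + 1) * f (l + 1)) -
            η * (∑ l ∈ Finset.range (a * h + b), γ ^ (l + 1) * f (l + 1))| ≤
          C * r ^ h := by
  set q := γ * lam
  have hq0 : 0 < q := mul_pos hγ0 hlam
  have hterm : ∀ l, ‖γ ^ (l + 1) * f (l + 1)‖ ≤ q * q ^ l := by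
    intro l
    rw [Real.norm_eq_abs, abs_of_nonneg (mul_nonneg (by positivity) (hf0 _ l.succ_pos)),
      ← pow_succ', mul_pow]
    gcongr
    exact hf1 _ l.succ_pos
  refine ⟨_, _, rfl, rfl, div_pos (mul_pos hη (pow_pos hq0 _)) (sub_pos.2 hγlam),
    pow_pos hq0 a, pow_lt_one₀ hq0.le hγlam (by omega), fun h => ?_⟩
  calc _ = η * ‖∑' l : ℕ, γ ^ (l + 1) * f (l + 1) -
          ∑ l ∈ range (a * h + b), γ ^ (l + 1) * f (l + 1)‖ := by
        rw [← mul_sub, abs_mul, abs_of_pos hη, Real.norm_eq_abs]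
    _ ≤ η * (q * q ^ (a * h + b) / (1 - q)) := by
        gcongr
        exact norm_tsum_sub_sum_range_le_geometric hq0.le hγlam hterm _
    _ = _ := by ring

/-- the approximation error of the γ-decaying heuristic from terms of
length at most g(h) = a·h + b decreases at least exponentially with h, with explicit
constants C = η·(γλ)^(b+1)/(1-γλ) and r = (γλ)^a. -/
theorem gamma_decaying_exponential_error
    (γ lam η : ℝ) (hγ0 : 0 < γ) (hγ1 : γ < 1) (hη : 0 < η) (hlam : 0 < lam)
    (hγlam : γ * lam < 1)
    (f : ℕ → ℝ) (hf0 : ∀ l : ℕ, 1 ≤ l → 0 ≤ f l) (hf1 : ∀ l : ℕ, 1 ≤ l → f l ≤ lam ^ l)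
    (a b : ℕ) (ha : 1 ≤ a) :
    ∃ C r : ℝ, C = η * (γ * lam) ^ (b + 1) / (1 - γ * lam) ∧ r = (γ * lam) ^ a ∧
      0 < C ∧ 0 < r ∧ r < 1 ∧
      ∀ h : ℕ,
        |η * (∑' l : ℕ, γ ^ (l + 1) * f (l + 1)) -
            η * (∑ l ∈ Finset.range (a * h + b), γ ^ (l + 1) * f (l + 1))| ≤
          C * r ^ h :=
  gamma_decaying_exponential_error_general γ lam η hγ0 hη hlam hγlam f hf0 hf1 a b ha
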